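/- arXiv:2111.05187 — 3 statements merged into one kernel-verified Lean document; each statement's English description precedes it below -/
import Mathlib

section
/- In the braid group B_n, band generators a_{i,j} and a_{k,m} commute whenever (i-k)(i-m)(j-k)(j-m) > 0, i.e., whenever the pairs {i,j} and {k,m} do not interlace. -/
/-- Auxiliary recursion for the band generators:
`bandAux σ k i = σ i * σ (i+1) * ⋯ * σ (i+k) * ⋯ * σ (i+1)⁻¹ * σ i⁻¹`. -/
def bandAux {G : Type*} [Group G] (σ : ℕ → G) : ℕ → ℕ → G
  | 0, i => σ i
  | (k + 1), i => σ i * bandAux σ k (i + 1) * (σ i)⁻¹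

/-- The band (BKL) generator `a_{i,j}` for `i < j`:
`a_{i,j} = σ_i σ_{i+1} ⋯ σ_{j-2} σ_{j-1} σ_{j-2}⁻¹ ⋯ σ_{i+1}⁻¹ σ_i⁻¹`. -/
def band {G : Type*} [Group G] (σ : ℕ → G) (i j : ℕ) : G := bandAux σ (j - i - 1) i

section Aux

variable {G : Type*} [Group G] (σ : ℕ → G)

/-- If `X` commutes with every letter of `bandAux σ kk i`, it commutes with the band. -/
lemma bandAux_commute (X : G) :
    ∀ kk i, (∀ s, i ≤ s → s ≤ i + kk → Commute X (σ s)) → Commute X (bandAux σ kk i)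
  | 0, i, h => h i le_rfl (by omega)
  | (kk+1), i, h => by
    have h1 : Commute X (σ i) := h i le_rfl (by omega)
    have h2 : Commute X (bandAux σ kk (i+1)) :=
      bandAux_commute X kk (i+1) (fun s a b => h s (by omega) (by omega))
    simp only [bandAux]
    exact (h1.mul_right h2).mul_right h1.inv_right

lemma braid_key {a b : G} (hbr : a * b * a = b * a * b) :
    a * b⁻¹ * a⁻¹ = b⁻¹ * a⁻¹ * b := by
  have h_inv : (a * b * a)⁻¹ = (b * a * b)⁻¹ := congrArg (·⁻¹) hbr
  have h2 := congrArg (fun x => a * x * b) h_inv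
  simp only [mul_inv_rev] at h2
  calc a * b⁻¹ * a⁻¹ = a * (b⁻¹ * (a⁻¹ * b⁻¹)) * b := by group
    _ = a * (a⁻¹ * (b⁻¹ * a⁻¹)) * b := h2.symm
    _ = b⁻¹ * a⁻¹ * b := by group

/-- A generator strictly inside the band commutes with the band. -/
lemma sigma_commute_bandAux (n : ℕ)
    (hcomm : ∀ a b, 1 ≤ a → a + 2 ≤ b → b ≤ n - 1 → σ a * σ b = σ b * σ a)
    (hbraid : ∀ a, 1 ≤ a → a + 1 ≤ n - 1 → σ a * σ (a + 1) * σ a = σ (a + 1) * σ a * σ (a + 1)) :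
    ∀ kk i t, 1 ≤ i → i + kk + 1 ≤ n → i + 1 ≤ t → t + 1 ≤ i + kk →
      Commute (σ t) (bandAux σ kk i) := by
  intro kk
  induction kk with
  | zero => intro i t h1 h2 h3 h4; omega
  | succ kk ih =>
    intro i t h1 h2 h3 h4
    rcases h3.eq_or_lt with heq | ht
    · -- t = i + 1
      subst heq
      obtain ⟨kk', rfl⟩ : ∃ kk', kk = kk' + 1 := ⟨kk - 1, by omega⟩
      simp only [bandAux]
      set a := σ i with ha
      set b := σ (i+1) with hb
      set B := bandAux σ kk' (i+2) with hB
      have hbr : a * b * a = b * a * b := hbraid i (by omega) (by omega)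
      have hab : a * B = B * a := by
        refine (bandAux_commute σ a kk' (i+2) (fun s hs1 hs2 => ?_)).eq
        exact hcomm i s (by omega) (by omega) (by omega)
      have key := braid_key hbr
      show b * (a * (b * B * b⁻¹) * a⁻¹) = (a * (b * B * b⁻¹) * a⁻¹) * b
      calc b * (a * (b * B * b⁻¹) * a⁻¹)
          = (b * a * b) * B * (b⁻¹ * a⁻¹) := by group
        _ = (a * b * a) * B * (b⁻¹ * a⁻¹) := by rw [hbr]
        _ = (a * b) * (a * B) * (b⁻¹ * a⁻¹) := by group
        _ = (a * b) * (B * a) * (b⁻¹ * a⁻¹) := by rw [hab]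
        _ = (a * b) * B * (a * b⁻¹ * a⁻¹) := by group
        _ = (a * b) * B * (b⁻¹ * a⁻¹ * b) := by rw [key]
        _ = (a * (b * B * b⁻¹) * a⁻¹) * b := by group
    · -- i + 2 ≤ t
      have c1 : Commute (σ t) (σ i) := (hcomm i t (by omega) (by omega) (by omega)).symm
      have c2 : Commute (σ t) (bandAux σ kk (i+1)) :=
        ih (i+1) t (by omega) (by omega) (by omega) (by omega)
      simp only [bandAux]
      exact (c1.mul_right c2).mul_right c1.inv_right

/-- Disjoint supports: `j < k`. -/
lemma band_commute_disjoint (n : ℕ)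
    (hcomm : ∀ a b, 1 ≤ a → a + 2 ≤ b → b ≤ n - 1 → σ a * σ b = σ b * σ a)
    {i j k m : ℕ} (hi : 1 ≤ i) (hij : i < j) (hjk : j < k) (hkm : k < m) (hmn : m ≤ n) :
    Commute (band σ i j) (band σ k m) := by
  refine bandAux_commute σ _ (m - k - 1) k (fun s hs1 hs2 => ?_)
  refine ((bandAux_commute σ (σ s) (j - i - 1) i (fun u hu1 hu2 => ?_)).symm)
  exact (hcomm u s (by omega) (by omega) (by omega)).symm

/-- Nested supports: `i < k < m < j`. -/
lemma band_commute_nested (n : ℕ)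
    (hcomm : ∀ a b, 1 ≤ a → a + 2 ≤ b → b ≤ n - 1 → σ a * σ b = σ b * σ a)
    (hbraid : ∀ a, 1 ≤ a → a + 1 ≤ n - 1 → σ a * σ (a + 1) * σ a = σ (a + 1) * σ a * σ (a + 1))
    {i j k m : ℕ} (hi : 1 ≤ i) (hik : i < k) (hkm : k < m) (hmj : m < j) (hjn : j ≤ n) :
    Commute (band σ i j) (band σ k m) := by
  refine bandAux_commute σ _ (m - k - 1) k (fun s hs1 hs2 => ?_)
  exact (sigma_commute_bandAux σ n hcomm hbraid (j - i - 1) i s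
    (by omega) (by omega) (by omega) (by omega)).symm

end Aux

/-- In the braid group `B_n` (formalized universally: in any group with
elements `σ₁, …, σ_{n-1}` satisfying the braid relations), the band generators `a_{i,j}` and
`a_{k,m}` commute whenever `(i-k)(i-m)(j-k)(j-m) > 0`, i.e. whenever the index pairs
`{i,j}` and `{k,m}` do not interlace. -/
theorem band_generators_commute {G : Type*} [Group G] (n : ℕ) (σ : ℕ → G)
    (hcomm : ∀ a b, 1 ≤ a → a + 2 ≤ b → b ≤ n - 1 → σ a * σ b = σ b * σ a)
    (hbraid : ∀ a, 1 ≤ a → a + 1 ≤ n - 1 → σ a * σ (a + 1) * σ a = σ (a + 1) * σ a * σ (a + 1))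
    (i j k m : ℕ) (hi : 1 ≤ i) (hij : i < j) (hjn : j ≤ n)
    (hk : 1 ≤ k) (hkm : k < m) (hmn : m ≤ n)
    (hnointer : 0 < ((i : ℤ) - k) * ((i : ℤ) - m) * ((j : ℤ) - k) * ((j : ℤ) - m)) :
    band σ i j * band σ k m = band σ k m * band σ i j := by
  have hcases : (j < k) ∨ (m < i) ∨ (i < k ∧ m < j) ∨ (k < i ∧ j < m) := by
    rcases lt_trichotomy i k with hik | rfl | hki
    · rcases lt_trichotomy j k with hjk | rfl | hkj
      · exact Or.inl hjk
      · simp at hnointer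
      · rcases lt_trichotomy j m with hjm | rfl | hmj
        · -- i < k < j < m : interlaced, contradiction
          exfalso
          have p1 : ((i:ℤ) - k) < 0 := by omega
          have p2 : ((i:ℤ) - m) < 0 := by omega
          have p3 : (0:ℤ) < ((j:ℤ) - k) := by omega
          have p4 : ((j:ℤ) - m) < 0 := by omega
          have q1 := mul_pos_of_neg_of_neg p1 p2
          have q2 := mul_pos q1 p3
          have q3 := mul_neg_of_pos_of_neg q2 p4
          linarith
        · simp at hnointer
        · exact Or.inr (Or.inr (Or.inl ⟨hik, hmj⟩))
    · simp at hnointer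
    · rcases lt_trichotomy m i with hmi | rfl | him
      · exact Or.inr (Or.inl hmi)
      · simp at hnointer
      · rcases lt_trichotomy j m with hjm | rfl | hmj
        · exact Or.inr (Or.inr (Or.inr ⟨hki, hjm⟩))
        · simp at hnointer
        · -- k < i < m < j : interlaced, contradiction
          exfalso
          have p1 : (0:ℤ) < ((i:ℤ) - k) := by omega
          have p2 : ((i:ℤ) - m) < 0 := by omega
          have p3 : (0:ℤ) < ((j:ℤ) - k) := by omega
          have p4 : (0:ℤ) < ((j:ℤ) - m) := by omega
          have q1 := mul_neg_of_pos_of_neg p1 p2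
          have q2 := mul_neg_of_neg_of_pos q1 p3
          have q3 := mul_neg_of_neg_of_pos q2 p4
          linarith
  rcases hcases with hjk | hmi | ⟨h1, h2⟩ | ⟨h1, h2⟩
  · exact (band_commute_disjoint σ n hcomm hi hij hjk hkm hmn).eq
  · exact ((band_commute_disjoint σ n hcomm hk hkm hmi hij hjn).symm).eq
  · exact (band_commute_nested σ n hcomm hbraid hi h1 hkm h2 hjn).eq
  · exact ((band_commute_nested σ n hcomm hbraid hk h1 hij h2 hmn).symm).eq
end

section
/- If a braid B on n strands is represented by the loop of monic polynomials g_t whose roots trace B, and the critical values v_j(t) of g_t satisfy ∂(arg v_j)/∂t ≠ 0 for all j and all t, then (z,t) ↦ arg g_t(z) has no critical points on (ℂ × S¹) minus the closure of B; i.e., the criticality condition (∂g_t/∂z)(z*) = 0 and (∂χ/∂t)(z*,t*) = 0 occurs if and only if some critical value satisfies ∂(arg v_j)/∂t(t*) = 0. -/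
/-- The unit-circle-valued "argument" map `w ↦ w/|w|`. -/
noncomputable def unitArg (w : ℂ) : ℂ := w / (‖w‖ : ℂ)

lemma unitArg_eq (z : ℂ) :
    unitArg z = (Real.sqrt (z.re * z.re + z.im * z.im))⁻¹ • z := by
  rw [unitArg, Complex.real_smul, ← Complex.normSq_apply, ← Complex.norm_def,
    div_eq_mul_inv, mul_comm, Complex.ofReal_inv]

lemma differentiableAt_unitArg {w : ℂ} (hw : w ≠ 0) :
    DifferentiableAt ℝ unitArg w := by
  have hq : DifferentiableAt ℝ (fun z : ℂ => z.re * z.re + z.im * z.im) w := by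
    exact ((Complex.reCLM.differentiableAt.mul Complex.reCLM.differentiableAt).add
      (Complex.imCLM.differentiableAt.mul Complex.imCLM.differentiableAt))
  have hpos : 0 < w.re * w.re + w.im * w.im := by
    have := Complex.normSq_pos.mpr hw
    rwa [Complex.normSq_apply] at this
  have hne : w.re * w.re + w.im * w.im ≠ 0 := ne_of_gt hpos
  have hs : DifferentiableAt ℝ (fun z : ℂ => Real.sqrt (z.re * z.re + z.im * z.im)) w :=
    hq.sqrt hne
  have hsne : Real.sqrt (w.re * w.re + w.im * w.im) ≠ 0 :=
    ne_of_gt (Real.sqrt_pos.mpr hpos)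
  have := (hs.inv hsne).smul (differentiableAt_id (x := w))
  have hfun : unitArg = fun z : ℂ => (Real.sqrt (z.re * z.re + z.im * z.im))⁻¹ • z :=
    funext unitArg_eq
  rw [hfun]
  exact this

lemma unitArg_ne_zero {w : ℂ} (hw : w ≠ 0) : unitArg w ≠ 0 := by
  rw [unitArg]
  exact div_ne_zero hw (by simpa using norm_ne_zero_iff.mpr hw)

lemma fderiv_unitArg_I_mul {w : ℂ} (hw : w ≠ 0) :
    fderiv ℝ unitArg w (Complex.I * w) = Complex.I * unitArg w := by
  have hL := (differentiableAt_unitArg hw).hasFDerivAt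
  have h0 : HasDerivAt (fun s : ℝ => (s : ℂ)) 1 0 := by
    simpa using (hasDerivAt_id (0 : ℝ)).ofReal_comp
  have hexp : HasDerivAt (fun s : ℝ => Complex.exp ((s : ℂ) * Complex.I))
      Complex.I 0 := by
    simpa using (h0.mul_const Complex.I).cexp
  have hφ : HasDerivAt (fun s : ℝ => Complex.exp ((s : ℂ) * Complex.I) * w)
      (Complex.I * w) 0 := hexp.mul_const w
  have hg0 : (fun s : ℝ => Complex.exp ((s : ℂ) * Complex.I) * w) 0 = w := by simp
  have hL' : HasFDerivAt unitArg (fderiv ℝ unitArg w)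
      ((fun s : ℝ => Complex.exp ((s : ℂ) * Complex.I) * w) 0) := by
    rw [hg0]; exact hL
  have hcomp := hL'.comp_hasDerivAt 0 hφ
  simp only [Function.comp_def] at hcomp
  have heq : (fun s : ℝ => unitArg (Complex.exp ((s : ℂ) * Complex.I) * w)) =
      fun s : ℝ => Complex.exp ((s : ℂ) * Complex.I) * unitArg w := by
    funext s
    have hne : ‖Complex.exp ((s : ℂ) * Complex.I)‖ = 1 := by
      simp [Complex.norm_exp]
    rw [unitArg, unitArg, norm_mul, hne, one_mul, mul_div_assoc]
  rw [heq] at hcomp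
  have hcomp2 : HasDerivAt (fun s : ℝ => Complex.exp ((s : ℂ) * Complex.I) * unitArg w)
      (Complex.I * unitArg w) 0 := hexp.mul_const (unitArg w)
  exact hcomp.unique hcomp2

/-- Let `g_t` be a smooth loop of monic degree-`n` complex polynomials whose
roots trace a braid, with critical points `c_j(t)` (enumerating exactly the zeros of
`∂g_t/∂z`, pairwise distinct) and nonzero critical values `v_j(t) = g_t(c_j(t))`.
Then a point `(z, t)` off the braid (i.e. with `g_t(z) ≠ 0`) is a critical point of the
circle-valued argument `χ(z,t) = arg g_t(z)` (realised as `unitArg (g_t(z))`) if and only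
if `z` is a critical point `c_j(t)` of `g_t` whose critical value satisfies
`∂(arg v_j)/∂t = 0` at `t` (realised as vanishing of the derivative of
`s ↦ unitArg (v_j(s))`). In particular, if `∂(arg v_j)/∂t ≠ 0` for all `j` and `t`, then
`χ` has no critical points off the braid. -/
theorem Pfibered_criticality_criterion (n : ℕ) (hn : 2 ≤ n) (g : ℝ → Polynomial ℂ)
    (hmonic : ∀ t, (g t).Monic) (hdeg : ∀ t, (g t).natDegree = n)
    (hloop : ∀ t, g (t + 2 * Real.pi) = g t)
    (hsmooth : ContDiff ℝ (⊤ : ℕ∞) (fun p : ℂ × ℝ => (g p.2).eval p.1))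
    (hroots : ∀ t, Squarefree (g t))
    (c : Fin (n - 1) → ℝ → ℂ)
    (hc : ∀ t z, (g t).derivative.eval z = 0 ↔ ∃ j, c j t = z)
    (hcdiff : ∀ j, Differentiable ℝ (c j))
    (hcinj : ∀ t, Function.Injective fun j => c j t)
    (hvne : ∀ j t, (g t).eval (c j t) ≠ 0) :
    ∀ z t, (g t).eval z ≠ 0 →
      (fderiv ℝ (fun p : ℂ × ℝ => unitArg ((g p.2).eval p.1)) (z, t) = 0 ↔
        ∃ j, c j t = z ∧ deriv (fun s => unitArg ((g s).eval (c j s))) t = 0) := by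
  intro z t hzt
  set F : ℂ × ℝ → ℂ := fun p => (g p.2).eval p.1 with hFdef
  set w : ℂ := (g t).eval z with hwdef
  have hw : w ≠ 0 := hzt
  have hFd : Differentiable ℝ F := hsmooth.differentiable (by simp)
  set DF : ℂ × ℝ →L[ℝ] ℂ := fderiv ℝ F (z, t) with hDFdef
  have hF' : HasFDerivAt F DF (z, t) := (hFd (z, t)).hasFDerivAt
  set L : ℂ →L[ℝ] ℂ := fderiv ℝ unitArg w with hLdef
  have hL : HasFDerivAt unitArg L w := (differentiableAt_unitArg hw).hasFDerivAt
  set d : ℂ := (g t).derivative.eval z with hddef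
  -- Chain rule for the full map
  have hchain : fderiv ℝ (fun p : ℂ × ℝ => unitArg (F p)) (z, t) = L.comp DF := by
    have := (hL.comp (z, t) hF').fderiv
    simpa [Function.comp_def] using this
  -- z-partial derivative
  have hleft : ∀ h : ℂ, DF (h, 0) = h * d := by
    have h1 : HasFDerivAt (fun y : ℂ => F (y, t))
        (DF.comp (ContinuousLinearMap.inl ℝ ℂ ℝ)) z :=
      by have := hF'.comp z (hasFDerivAt_prodMk_left (𝕜 := ℝ) z t); exact this
    have h2 : HasFDerivAt (fun y : ℂ => (g t).eval y)
        ((ContinuousLinearMap.smulRight (1 : ℂ →L[ℂ] ℂ) d).restrictScalars ℝ) z :=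
      ((Polynomial.hasDerivAt (g t) z).hasFDerivAt).restrictScalars ℝ
    have h3 := h1.unique h2
    intro h
    have := congrFun (congrArg (fun (T : ℂ →L[ℝ] ℂ) => (T : ℂ → ℂ)) h3) h
    simpa [smul_eq_mul] using this
  -- t-partial derivative
  have hright : HasDerivAt (fun s : ℝ => F (z, s)) (DF (0, 1)) t := by
    have hγ : HasDerivAt (fun s : ℝ => ((z, s) : ℂ × ℝ)) ((0 : ℂ), (1 : ℝ)) t :=
      HasDerivAt.prodMk (hasDerivAt_const t z) (hasDerivAt_id t)
    exact hF'.comp_hasDerivAt t hγ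
  -- splitting DF
  have hsplit : ∀ (h : ℂ) (k : ℝ), DF (h, k) = h * d + k • DF (0, 1) := by
    intro h k
    have : ((h, k) : ℂ × ℝ) = (h, 0) + k • ((0 : ℂ), (1 : ℝ)) := by
      simp [Prod.ext_iff]
    rw [this, map_add, map_smul, hleft]
  constructor
  · intro hcrit
    have hLDF : L.comp DF = 0 := by rw [← hchain]; exact hcrit
    have happ : ∀ p : ℂ × ℝ, L (DF p) = 0 := by
      intro p
      have := congrFun (congrArg (fun (T : ℂ × ℝ →L[ℝ] ℂ) => (T : ℂ × ℝ → ℂ)) hLDF) p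
      simpa using this
    -- first: d = 0
    have hd0 : d = 0 := by
      by_contra hd
      have hIw : L (Complex.I * w) = 0 := by
        have := happ (d⁻¹ * (Complex.I * w), 0)
        rw [hleft] at this
        rwa [show d⁻¹ * (Complex.I * w) * d = Complex.I * w by field_simp] at this
      rw [hLdef, fderiv_unitArg_I_mul hw] at hIw
      exact mul_ne_zero Complex.I_ne_zero (unitArg_ne_zero hw) hIw
    obtain ⟨j, hj⟩ := (hc t z).mp hd0
    refine ⟨j, hj, ?_⟩
    -- derivative of the critical value curve
    have hγ : HasDerivAt (fun s : ℝ => ((c j s, s) : ℂ × ℝ)) (deriv (c j) t, 1) t :=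
      HasDerivAt.prodMk ((hcdiff j t).hasDerivAt) (hasDerivAt_id t)
    have hv : HasDerivAt (fun s : ℝ => F (c j s, s)) (DF (deriv (c j) t, 1)) t := by
      have := hF'.comp_hasDerivAt_of_eq t hγ (by rw [hj])
      simpa [Function.comp_def] using this
    have hva : HasDerivAt (fun s : ℝ => unitArg (F (c j s, s)))
        (L (DF (deriv (c j) t, 1))) t := by
      have := hL.comp_hasDerivAt_of_eq t hv (by simp [hFdef, hwdef, hj])
      simpa [Function.comp_def] using this
    have hderiv : deriv (fun s : ℝ => unitArg ((g s).eval (c j s))) t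
        = L (DF (deriv (c j) t, 1)) := hva.deriv
    rw [hderiv, hsplit, hd0, mul_zero, zero_add, map_smul, one_smul]
    exact happ (0, 1)
  · rintro ⟨j, hj, hv0⟩
    have hd0 : d = 0 := (hc t z).mpr ⟨j, hj⟩
    -- derivative of the critical value curve again
    have hγ : HasDerivAt (fun s : ℝ => ((c j s, s) : ℂ × ℝ)) (deriv (c j) t, 1) t :=
      HasDerivAt.prodMk ((hcdiff j t).hasDerivAt) (hasDerivAt_id t)
    have hv : HasDerivAt (fun s : ℝ => F (c j s, s)) (DF (deriv (c j) t, 1)) t := by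
      have := hF'.comp_hasDerivAt_of_eq t hγ (by rw [hj])
      simpa [Function.comp_def] using this
    have hva : HasDerivAt (fun s : ℝ => unitArg (F (c j s, s)))
        (L (DF (deriv (c j) t, 1))) t := by
      have := hL.comp_hasDerivAt_of_eq t hv (by simp [hFdef, hwdef, hj])
      simpa [Function.comp_def] using this
    have h01 : L (DF (0, 1)) = 0 := by
      have hderiv : deriv (fun s : ℝ => unitArg ((g s).eval (c j s))) t
          = L (DF (deriv (c j) t, 1)) := hva.deriv
      have := hderiv ▸ hv0
      rwa [hsplit, hd0, mul_zero, zero_add, map_smul, one_smul] at this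
    rw [hchain]
    refine ContinuousLinearMap.ext fun p => ?_
    obtain ⟨h, k⟩ := p
    simp only [ContinuousLinearMap.comp_apply, ContinuousLinearMap.zero_apply]
    rw [hsplit, hd0, mul_zero, zero_add, map_smul, h01, smul_zero]
end

section
/- Any circle-valued map on the complement of a fibered link in S³ which restricts to a fibration with no critical points equals, up to fiber-preserving data, an open book; in particular, if B is a geometric braid given by roots of a loop of monic polynomials g_t and arg g : (ℂ × S¹) \ cl(B) → S¹ has no critical points, then arg g extends to a fibration of S³ \ cl(B) over S¹ using the identification (D̄ × S¹)/((e^{iχ}, t₁) ∼ (e^{iχ}, t₂)) ≅ S³ and the boundary behaviour lim_{r→∞} arg g_t(re^{iφ}) = nφ. -/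
open Complex

/-- An orientation-preserving diffeomorphism from the open unit disk onto `ℂ`. -/
noncomputable def phiDisk (u : ℂ) : ℂ := u / ((1 - ‖u‖ : ℝ) : ℂ)

/-- The setoid on `D̄ × S¹` (closed unit disk times circle) collapsing the boundary torus
along longitudes: `(u, t) ∼ (u', t')` iff `u = u'` and either `t = t'` or `‖u‖ = 1`.
The quotient is homeomorphic to `S³`. -/
def sphereSetoid : Setoid ((Metric.closedBall (0 : ℂ) 1) × AddCircle (2 * Real.pi)) where
  r x y := x.1 = y.1 ∧ (x.2 = y.2 ∨ ‖(x.1 : ℂ)‖ = 1)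
  iseqv := by
    refine ⟨fun x => ⟨rfl, Or.inl rfl⟩, ?_, ?_⟩
    · rintro ⟨u, t⟩ ⟨u', t'⟩ ⟨h₁, h₂⟩
      subst h₁
      exact ⟨rfl, h₂.imp Eq.symm id⟩
    · rintro ⟨u, t⟩ ⟨u', t'⟩ ⟨u'', t''⟩ ⟨h₁, h₂⟩ ⟨h₃, h₄⟩
      subst h₁; subst h₃
      refine ⟨rfl, ?_⟩
      rcases h₂ with h | h
      · rcases h₄ with h' | h'
        · exact Or.inl (h.trans h')
        · exact Or.inr h'
      · exact Or.inr h

/-- The model of `S³` as the quotient of `D̄ × S¹` collapsing the boundary torus along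
longitudes. -/
def Sphere3 : Type := Quotient sphereSetoid

noncomputable instance : TopologicalSpace Sphere3 := instTopologicalSpaceQuotient

/-- The complement in the quotient `S³` of (the image of) the closed braid traced by the
roots of the loop of polynomials `g`. -/
def braidComplement (g : AddCircle (2 * Real.pi) → Polynomial ℂ) : Set Sphere3 :=
  {x | ∀ (u : Metric.closedBall (0 : ℂ) 1) (t : AddCircle (2 * Real.pi)),
    (Quotient.mk sphereSetoid (u, t) : Sphere3) = x →
      ‖(u : ℂ)‖ = 1 ∨ (g t).eval (phiDisk (u : ℂ)) ≠ 0}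



lemma coeff_bound (n : ℕ) (g : AddCircle (2 * Real.pi) → Polynomial ℂ)
    (hdeg : ∀ t, (g t).natDegree = n)
    (hcont : Continuous fun x : ℂ × AddCircle (2 * Real.pi) => (g x.2).eval x.1) :
    ∃ C : ℝ, 0 < C ∧ ∀ t, ∀ k, k < n → ‖(g t).coeff k‖ ≤ C := by
  classical
  haveI : Fact (0 < 2*Real.pi) := ⟨by positivity⟩
  have hinj : Set.InjOn (fun i : ℕ => (i : ℂ)) (Finset.range (n+1) : Set ℕ) :=
    fun a _ b _ h => Nat.cast_inj.mp h
  have hrep : ∀ t, g t = Lagrange.interpolate (Finset.range (n+1)) (fun i : ℕ => (i : ℂ))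
      (fun i => (g t).eval (i : ℂ)) := by
    intro t
    apply Lagrange.eq_interpolate hinj
    rw [Finset.card_range]
    calc (g t).degree ≤ ((g t).natDegree : WithBot ℕ) := Polynomial.degree_le_natDegree
    _ < ((n+1 : ℕ) : WithBot ℕ) := by rw [hdeg t]; exact_mod_cast Nat.lt_succ_self n
  have hcoeff : ∀ k, Continuous fun t => (g t).coeff k := by
    intro k
    have heq : (fun t => (g t).coeff k) = fun t => ∑ i ∈ Finset.range (n+1),
        (g t).eval (i : ℂ) * (Lagrange.basis (Finset.range (n+1)) (fun i : ℕ => (i : ℂ)) i).coeff k := by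
      funext t
      conv_lhs => rw [hrep t]
      rw [Lagrange.interpolate_apply, Polynomial.finset_sum_coeff]
      exact Finset.sum_congr rfl fun i _ => by rw [Polynomial.coeff_C_mul]
    rw [heq]
    exact continuous_finset_sum _ fun i _ =>
      (hcont.comp (Continuous.prodMk continuous_const continuous_id)).mul continuous_const
  set h : AddCircle (2*Real.pi) → ℝ := fun t => ∑ k ∈ Finset.range n, ‖(g t).coeff k‖ with hh
  have hhc : Continuous h := continuous_finset_sum _ fun k _ => (hcoeff k).norm
  obtain ⟨t₀, -, hmax⟩ := isCompact_univ.exists_isMaxOn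
    ⟨(0 : AddCircle (2*Real.pi)), Set.mem_univ _⟩ hhc.continuousOn
  have h0 : 0 ≤ h t₀ := Finset.sum_nonneg fun _ _ => norm_nonneg _
  refine ⟨h t₀ + 1, by linarith, fun t k hk => ?_⟩
  have h1 : ‖(g t).coeff k‖ ≤ h t :=
    Finset.single_le_sum (f := fun k => ‖(g t).coeff k‖) (fun i _ => norm_nonneg _)
      (Finset.mem_range.mpr hk)
  have h2 : h t ≤ h t₀ := hmax (Set.mem_univ t)
  linarith

lemma eval_sub_bound (n : ℕ) (hn : 1 ≤ n) (g : AddCircle (2 * Real.pi) → Polynomial ℂ)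
    (hmonic : ∀ t, (g t).Monic) (hdeg : ∀ t, (g t).natDegree = n)
    (C : ℝ) (hcoef : ∀ t, ∀ k, k < n → ‖(g t).coeff k‖ ≤ C) :
    ∀ t z, 1 ≤ ‖z‖ → ‖(g t).eval z - z ^ n‖ ≤ C * n * ‖z‖ ^ (n - 1) := by
  intro t z hz
  have hC : 0 ≤ C := le_trans (norm_nonneg _) (hcoef t 0 (by omega))
  have hev : (g t).eval z = ∑ i ∈ Finset.range (n+1), (g t).coeff i * z ^ i := by
    have := Polynomial.eval_eq_sum_range (p := g t) z
    rwa [hdeg t] at this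
  have hlead : (g t).coeff n = 1 := by
    have := (hmonic t).coeff_natDegree
    rwa [hdeg t] at this
  have hsub : (g t).eval z - z ^ n = ∑ i ∈ Finset.range n, (g t).coeff i * z ^ i := by
    rw [hev, Finset.sum_range_succ, hlead, one_mul]; ring
  rw [hsub]
  calc ‖∑ i ∈ Finset.range n, (g t).coeff i * z ^ i‖
      ≤ ∑ i ∈ Finset.range n, ‖(g t).coeff i * z ^ i‖ := norm_sum_le _ _
    _ ≤ ∑ i ∈ Finset.range n, C * ‖z‖ ^ (n-1) := by
        refine Finset.sum_le_sum fun i hi => ?_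
        have hi' : i < n := Finset.mem_range.mp hi
        rw [norm_mul, norm_pow]
        exact mul_le_mul (hcoef t i hi')
          (pow_le_pow_right₀ hz (by omega : i ≤ n - 1)) (by positivity) hC
    _ = C * n * ‖z‖ ^ (n-1) := by rw [Finset.sum_const, Finset.card_range, nsmul_eq_mul]; ring


lemma norm_phiDisk (u : ℂ) (h : ‖u‖ < 1) : ‖phiDisk u‖ = ‖u‖ / (1 - ‖u‖) := by
  rw [phiDisk, norm_div, Complex.norm_real, Real.norm_eq_abs, abs_of_pos (by linarith)]

lemma unit_diff (a b : ℂ) (ha : a ≠ 0) (hb : b ≠ 0) :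
    ‖b / ((‖b‖ : ℝ) : ℂ) - a / ((‖a‖ : ℝ) : ℂ)‖ ≤ 2 * ‖b - a‖ / ‖a‖ := by
  have ha' : (0:ℝ) < ‖a‖ := norm_pos_iff.mpr ha
  have hb' : (0:ℝ) < ‖b‖ := norm_pos_iff.mpr hb
  have hbn : ((‖b‖ : ℝ) : ℂ) ≠ 0 := Complex.ofReal_ne_zero.mpr hb'.ne'
  have han : ((‖a‖ : ℝ) : ℂ) ≠ 0 := Complex.ofReal_ne_zero.mpr ha'.ne'
  have htri : ‖b / ((‖b‖ : ℝ) : ℂ) - a / ((‖a‖ : ℝ) : ℂ)‖ ≤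
      ‖b / ((‖b‖ : ℝ) : ℂ) - b / ((‖a‖ : ℝ) : ℂ)‖ + ‖b / ((‖a‖ : ℝ) : ℂ) - a / ((‖a‖ : ℝ) : ℂ)‖ := by
    have := norm_add_le (b / ((‖b‖ : ℝ) : ℂ) - b / ((‖a‖ : ℝ) : ℂ))
      (b / ((‖a‖ : ℝ) : ℂ) - a / ((‖a‖ : ℝ) : ℂ))
    rwa [sub_add_sub_cancel] at this
  have h2 : ‖b / ((‖a‖ : ℝ) : ℂ) - a / ((‖a‖ : ℝ) : ℂ)‖ = ‖b - a‖ / ‖a‖ := by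
    rw [div_sub_div_same, norm_div, Complex.norm_real, Real.norm_eq_abs, abs_of_pos ha']
  have habs : |‖a‖ - ‖b‖| ≤ ‖b - a‖ := by
    rw [norm_sub_rev]; exact abs_norm_sub_norm_le a b
  have h1 : ‖b / ((‖b‖ : ℝ) : ℂ) - b / ((‖a‖ : ℝ) : ℂ)‖ ≤ ‖b - a‖ / ‖a‖ := by
    have heq : b / ((‖b‖ : ℝ) : ℂ) - b / ((‖a‖ : ℝ) : ℂ)
        = (((‖a‖ : ℝ) : ℂ) - ((‖b‖ : ℝ) : ℂ)) * b / (((‖b‖ : ℝ) : ℂ) * ((‖a‖ : ℝ) : ℂ)) := by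
      rw [div_sub_div _ _ hbn han]
      congr 1
      ring
    rw [heq, norm_div, norm_mul, norm_mul, Complex.norm_real, Complex.norm_real,
      Real.norm_eq_abs, Real.norm_eq_abs, abs_of_pos ha', abs_of_pos hb']
    have hnum : ‖((‖a‖ : ℝ) : ℂ) - ((‖b‖ : ℝ) : ℂ)‖ = |‖a‖ - ‖b‖| := by
      rw [← Complex.ofReal_sub, Complex.norm_real, Real.norm_eq_abs]
    rw [hnum]
    rw [div_le_div_iff₀ (by positivity) ha']
    calc |‖a‖ - ‖b‖| * ‖b‖ * ‖a‖ ≤ ‖b - a‖ * ‖b‖ * ‖a‖ := by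
          apply mul_le_mul_of_nonneg_right (mul_le_mul_of_nonneg_right habs hb'.le) ha'.le
      _ = ‖b - a‖ * (‖b‖ * ‖a‖) := by ring
  have hx : 2 * ‖b - a‖ / ‖a‖ = ‖b - a‖ / ‖a‖ + ‖b - a‖ / ‖a‖ := by ring
  linarith

lemma pow_diff (a b : ℂ) (ha : ‖a‖ ≤ 1) (hb : ‖b‖ ≤ 1) :
    ∀ n : ℕ, ‖a ^ n - b ^ n‖ ≤ n * ‖a - b‖ := by
  intro n
  induction n with
  | zero => simp
  | succ m ih =>
    have key : a ^ (m+1) - b ^ (m+1) = a * (a ^ m - b ^ m) + (a - b) * b ^ m := by ring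
    calc ‖a ^ (m+1) - b ^ (m+1)‖ ≤ ‖a * (a ^ m - b ^ m)‖ + ‖(a - b) * b ^ m‖ := by
          rw [key]; exact norm_add_le _ _
      _ ≤ 1 * (m * ‖a - b‖) + ‖a - b‖ * 1 := by
          rw [norm_mul, norm_mul, norm_pow]
          have e1 : ‖a‖ * ‖a ^ m - b ^ m‖ ≤ 1 * (↑m * ‖a - b‖) :=
            mul_le_mul ha ih (norm_nonneg _) zero_le_one
          have e2 : ‖a - b‖ * ‖b‖ ^ m ≤ ‖a - b‖ * 1 :=
            mul_le_mul_of_nonneg_left (pow_le_one₀ (norm_nonneg _) hb) (norm_nonneg _)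
          linarith
      _ = (↑(m+1)) * ‖a - b‖ := by push_cast; ring

lemma phiDisk_pow_unit (u : ℂ) (h0 : u ≠ 0) (h1 : ‖u‖ < 1) (n : ℕ) :
    (phiDisk u) ^ n / ((‖(phiDisk u) ^ n‖ : ℝ) : ℂ) = (u / ((‖u‖ : ℝ) : ℂ)) ^ n := by
  have hu : (0:ℝ) < ‖u‖ := norm_pos_iff.mpr h0
  have hd : (0:ℝ) < 1 - ‖u‖ := by linarith
  have hun : ((‖u‖ : ℝ) : ℂ) ≠ 0 := Complex.ofReal_ne_zero.mpr hu.ne'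
  have hdn : (((1 - ‖u‖ : ℝ)) : ℂ) ≠ 0 := Complex.ofReal_ne_zero.mpr hd.ne'
  rw [norm_pow, norm_phiDisk u h1, phiDisk]
  rw [div_pow, Complex.ofReal_pow, Complex.ofReal_div, div_pow, div_pow]
  have h1n : (((1 - ‖u‖ : ℝ)) : ℂ) ^ n ≠ 0 := pow_ne_zero _ hdn
  have h2n : ((‖u‖ : ℝ) : ℂ) ^ n ≠ 0 := pow_ne_zero _ hun
  push_cast at h1n
  field_simp

set_option maxHeartbeats 1000000 in
lemma main_est (n : ℕ) (hn : 1 ≤ n) (g : AddCircle (2 * Real.pi) → Polynomial ℂ)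
    (C : ℝ) (hC : 0 < C)
    (hbound : ∀ t z, 1 ≤ ‖z‖ → ‖(g t).eval z - z ^ n‖ ≤ C * n * ‖z‖ ^ (n - 1))
    (ε : ℝ) (hε : 0 < ε) :
    ∃ δ : ℝ, 0 < δ ∧ (n : ℝ) * δ < ε ∧ ∀ (u u₀ : ℂ) (t : AddCircle (2 * Real.pi)),
      ‖u‖ < 1 → ‖u₀‖ = 1 → ‖u - u₀‖ < δ →
      (g t).eval (phiDisk u) ≠ 0 ∧
      ‖(g t).eval (phiDisk u) / ((‖(g t).eval (phiDisk u)‖ : ℝ) : ℂ) - u₀ ^ n‖ < ε := by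
  have hn' : (1:ℝ) ≤ (n:ℝ) := by exact_mod_cast hn
  set K := C * (n:ℝ) with hKdef
  have hK0 : 0 < K := by positivity
  set D := 4*K + 2*(n:ℝ) + 1 with hDdef
  have hD0 : 0 < D := by positivity
  set δ := min (1/2) (min (1/(2*K+2)) (ε/D)) with hδdef
  have hδ0 : 0 < δ := by positivity
  have hδa : δ ≤ 1/2 := min_le_left _ _
  have hδb : δ ≤ 1/(2*K+2) := le_trans (min_le_right _ _) (min_le_left _ _)
  have hδc : δ ≤ ε/D := le_trans (min_le_right _ _) (min_le_right _ _)
  have hfinal : (4*K + 2*(n:ℝ)) * δ < ε := by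
    have h1 : (4*K + 2*(n:ℝ)) * δ ≤ (4*K + 2*(n:ℝ)) * (ε/D) :=
      mul_le_mul_of_nonneg_left hδc (by positivity)
    have h2 : (4*K + 2*(n:ℝ)) * (ε/D) < ε := by
      have h3 : (4*K + 2*(n:ℝ)) < D := by rw [hDdef]; linarith
      calc (4*K + 2*(n:ℝ)) * (ε/D) < D * (ε/D) :=
            mul_lt_mul_of_pos_right h3 (by positivity)
        _ = ε := by field_simp
    linarith
  have hnδ : (n:ℝ) * δ < ε := by
    have hp1 : 0 ≤ K * δ := by positivity
    have hp2 : 0 ≤ (n:ℝ) * δ := by positivity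
    nlinarith [hfinal]
  refine ⟨δ, hδ0, hnδ, ?_⟩
  intro u u₀ t hu hu0 hd
  have h1 : 1 - δ < ‖u‖ := by
    have h := norm_sub_norm_le u₀ u
    rw [norm_sub_rev, hu0] at h
    linarith
  have hu2 : (1:ℝ)/2 ≤ ‖u‖ := by linarith
  have hu0' : u ≠ 0 := by intro h; rw [h, norm_zero] at hu2; linarith
  have hd1 : 0 < 1 - ‖u‖ := by linarith
  have hd2 : 1 - ‖u‖ < δ := by linarith
  set z := phiDisk u with hzdef
  have hz : ‖z‖ = ‖u‖/(1-‖u‖) := norm_phiDisk u hu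
  have hzbig : 1/(2*δ) < ‖z‖ := by
    rw [hz]
    calc 1/(2*δ) = (1/2)/δ := by ring
      _ < (1/2)/(1-‖u‖) := div_lt_div_of_pos_left one_half_pos hd1 hd2
      _ ≤ ‖u‖/(1-‖u‖) := by gcongr
  have hKz : K + 1 ≤ 1/(2*δ) := by
    rw [le_div_iff₀ (by positivity)]
    have h' : δ*(2*K+2) ≤ 1 := by
      have := (le_div_iff₀ (by positivity : (0:ℝ) < 2*K+2)).mp hδb
      linarith
    nlinarith
  have hz1 : 1 ≤ ‖z‖ := by linarith
  have hzK : K < ‖z‖ := by linarith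
  have hzne : z ≠ 0 := by intro h; rw [h, norm_zero] at hz1; linarith
  have hpow : ‖z‖^n = ‖z‖^(n-1) * ‖z‖ := by
    obtain ⟨m, hm⟩ : ∃ m, n = m + 1 := ⟨n-1, by omega⟩
    subst hm
    simp [pow_succ]
  have hb := hbound t z hz1
  set b := (g t).eval z with hbdef
  have hzm1 : 1 ≤ ‖z‖^(n-1) := one_le_pow₀ hz1
  have hblow : ‖z‖^(n-1) ≤ ‖b‖ := by
    have h5 : ‖z^n‖ - ‖b‖ ≤ ‖z^n - b‖ := norm_sub_norm_le _ _
    rw [norm_pow, norm_sub_rev] at h5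
    have h7 : 1 ≤ ‖z‖ - K := by linarith
    have h8 : ‖z‖^(n-1) * 1 ≤ ‖z‖^(n-1) * (‖z‖ - K) :=
      mul_le_mul_of_nonneg_left h7 (by positivity)
    nlinarith [hb, hpow, h5, h8]
  have hbne : b ≠ 0 := by intro h; rw [h, norm_zero] at hblow; linarith
  refine ⟨hbne, ?_⟩
  have hud := unit_diff (z^n) b (pow_ne_zero _ hzne) hbne
  have hb' : ‖b - z^n‖ ≤ K * ‖z‖^(n-1) := by rw [hKdef]; exact hb
  have hz0 : (0:ℝ) < ‖z‖ := by linarith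
  have h9 : 2*‖b - z^n‖/‖z^n‖ ≤ 2*K/‖z‖ := by
    rw [norm_pow, hpow, div_le_div_iff₀ (mul_pos (pow_pos hz0 _) hz0) hz0]
    have hmul := mul_le_mul_of_nonneg_right hb' (norm_nonneg z)
    nlinarith [hmul]
  have h10 : 2*K/‖z‖ < 4*K*δ := by
    rw [div_lt_iff₀ hz0]
    have h11 := mul_lt_mul_of_pos_left hzbig (by positivity : (0:ℝ) < 4*K*δ)
    have heq2 : 4*K*δ*(1/(2*δ)) = 2*K := by field_simp; ring
    nlinarith
  have hphi := phiDisk_pow_unit u hu0' hu n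
  have hupos : (0:ℝ) < ‖u‖ := by linarith
  have hun1 : ‖u / ((‖u‖:ℝ):ℂ)‖ = 1 := by
    rw [norm_div, Complex.norm_real, Real.norm_eq_abs, abs_of_pos hupos,
      div_self hupos.ne']
  have ha1 : ‖u / ((‖u‖:ℝ):ℂ) - u‖ = 1 - ‖u‖ := by
    have hne : ((‖u‖:ℝ):ℂ) ≠ 0 := Complex.ofReal_ne_zero.mpr hupos.ne'
    have heq3 : u / ((‖u‖:ℝ):ℂ) - u = u * ((1:ℂ) - ((‖u‖:ℝ):ℂ)) / ((‖u‖:ℝ):ℂ) := by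
      rw [eq_div_iff hne, sub_mul, div_mul_cancel₀ _ hne]
      ring
    rw [heq3, norm_div, norm_mul,
      show (1 : ℂ) - ((‖u‖:ℝ):ℂ) = (((1 - ‖u‖ : ℝ)):ℂ) by push_cast; ring,
      Complex.norm_real, Complex.norm_real, Real.norm_eq_abs, Real.norm_eq_abs,
      abs_of_pos hd1, abs_of_pos hupos, mul_comm, mul_div_assoc, div_self hupos.ne', mul_one]
  have hdiff2 : ‖u / ((‖u‖:ℝ):ℂ) - u₀‖ ≤ 2*δ := by
    have htri2 : ‖u / ((‖u‖:ℝ):ℂ) - u₀‖ ≤ ‖u / ((‖u‖:ℝ):ℂ) - u‖ + ‖u - u₀‖ := by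
      have := norm_add_le (u / ((‖u‖:ℝ):ℂ) - u) (u - u₀)
      rwa [sub_add_sub_cancel] at this
    rw [ha1] at htri2
    linarith
  have hpd := pow_diff (u / ((‖u‖:ℝ):ℂ)) u₀ (le_of_eq hun1) (le_of_eq hu0) n
  have htri3 : ‖b/((‖b‖:ℝ):ℂ) - u₀^n‖ ≤
      ‖b/((‖b‖:ℝ):ℂ) - z^n/((‖z^n‖:ℝ):ℂ)‖ + ‖z^n/((‖z^n‖:ℝ):ℂ) - u₀^n‖ := by
    have := norm_add_le (b/((‖b‖:ℝ):ℂ) - z^n/((‖z^n‖:ℝ):ℂ)) (z^n/((‖z^n‖:ℝ):ℂ) - u₀^n)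
    rwa [sub_add_sub_cancel] at this
  have hsecond : ‖z^n/((‖z^n‖:ℝ):ℂ) - u₀^n‖ ≤ (n:ℝ) * (2*δ) := by
    rw [hphi]
    calc ‖(u / ((‖u‖:ℝ):ℂ))^n - u₀^n‖ ≤ (n:ℝ) * ‖u / ((‖u‖:ℝ):ℂ) - u₀‖ := hpd
      _ ≤ (n:ℝ) * (2*δ) := mul_le_mul_of_nonneg_left hdiff2 (by positivity)
  have hfirst : ‖b/((‖b‖:ℝ):ℂ) - z^n/((‖z^n‖:ℝ):ℂ)‖ < 4*K*δ := by
    calc ‖b/((‖b‖:ℝ):ℂ) - z^n/((‖z^n‖:ℝ):ℂ)‖ ≤ 2*‖b - z^n‖/‖z^n‖ := hud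
      _ ≤ 2*K/‖z‖ := h9
      _ < 4*K*δ := h10
  calc ‖b/((‖b‖:ℝ):ℂ) - u₀^n‖
      ≤ ‖b/((‖b‖:ℝ):ℂ) - z^n/((‖z^n‖:ℝ):ℂ)‖ + ‖z^n/((‖z^n‖:ℝ):ℂ) - u₀^n‖ := htri3
    _ < 4*K*δ + (n:ℝ)*(2*δ) := by linarith
    _ = (4*K + 2*(n:ℝ)) * δ := by ring
    _ < ε := hfinal


open Classical in
noncomputable def Fext (n : ℕ) (g : AddCircle (2 * Real.pi) → Polynomial ℂ)
    (p : (Metric.closedBall (0 : ℂ) 1) × AddCircle (2 * Real.pi)) : ℂ :=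
  if ‖(p.1 : ℂ)‖ = 1 then (p.1 : ℂ) ^ n
  else (g p.2).eval (phiDisk (p.1 : ℂ)) / ((‖(g p.2).eval (phiDisk (p.1 : ℂ))‖ : ℝ) : ℂ)

lemma Fext_respects (n : ℕ) (g : AddCircle (2 * Real.pi) → Polynomial ℂ) :
    ∀ p q, sphereSetoid.r p q → Fext n g p = Fext n g q := by
  rintro ⟨u, t⟩ ⟨u', t'⟩ ⟨h1, h2⟩
  dsimp only at h1
  subst h1
  rcases h2 with h | h
  · dsimp only at h; subst h; rfl
  · simp only [Fext, if_pos h]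

noncomputable def Phibar (n : ℕ) (g : AddCircle (2 * Real.pi) → Polynomial ℂ) :
    Sphere3 → ℂ :=
  Quotient.lift (Fext n g) (Fext_respects n g)

lemma isOpen_sphere3 {U : Set Sphere3}
    (h : IsOpen (Quotient.mk sphereSetoid ⁻¹' U)) : IsOpen U :=
  h


set_option maxHeartbeats 2000000

/-- Let `g_t`, `t ∈ S¹`, be a loop of monic degree-`n` polynomials with
distinct roots tracing a closed braid, such that the circle-valued argument
`χ(z,t) = arg g_t(z)` has no critical points off the braid (realised as nonvanishing of
the real derivative of the unit-valued map `(z,t) ↦ g_t(z)/|g_t(z)|`).  Then `χ` extends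
to a well-defined continuous circle-valued map on `S³` minus the closed braid, where `S³`
is the quotient of `D̄ × S¹` collapsing the boundary torus along longitudes (via the
diffeomorphism `φ : D → ℂ`), and on the collapsed boundary the extension takes the value
`u ↦ uⁿ` (corresponding to `lim_{r→∞} arg g_t(r e^{iφ}) = nφ`). -/
theorem arg_extends_to_sphere (n : ℕ) (hn : 1 ≤ n)
    (g : AddCircle (2 * Real.pi) → Polynomial ℂ)
    (hmonic : ∀ t, (g t).Monic) (hdeg : ∀ t, (g t).natDegree = n)
    (hroots : ∀ t, Squarefree (g t))
    (hcont : Continuous fun x : ℂ × AddCircle (2 * Real.pi) => (g x.2).eval x.1)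
    (hsubm : ∀ (z : ℂ) (t : ℝ), (g (t : AddCircle (2 * Real.pi))).eval z ≠ 0 →
      fderiv ℝ (fun x : ℂ × ℝ =>
        (g (x.2 : AddCircle (2 * Real.pi))).eval x.1 /
          ((‖(g (x.2 : AddCircle (2 * Real.pi))).eval x.1‖ : ℝ) : ℂ)) (z, t) ≠ 0) :
    ∃ Φ : {x : Sphere3 // x ∈ braidComplement g} → ℂ,
      Continuous Φ ∧ (∀ x, ‖Φ x‖ = 1) ∧
      ∀ (x : {x : Sphere3 // x ∈ braidComplement g})
        (u : Metric.closedBall (0 : ℂ) 1) (t : AddCircle (2 * Real.pi)),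
        (Quotient.mk sphereSetoid (u, t) : Sphere3) = (x : Sphere3) →
        (‖(u : ℂ)‖ < 1 →
          Φ x = (g t).eval (phiDisk (u : ℂ)) /
            ((‖(g t).eval (phiDisk (u : ℂ))‖ : ℝ) : ℂ)) ∧
        (‖(u : ℂ)‖ = 1 → Φ x = (u : ℂ) ^ n) := by
  classical
  obtain ⟨C, hC, hcoef⟩ := coeff_bound n g hdeg hcont
  have hbound := eval_sub_bound n hn g hmonic hdeg C hcoef
  refine ⟨fun x => Phibar n g (x : Sphere3), ?_, ?_, ?_⟩
  · -- continuity
    have hCA : ∀ x ∈ braidComplement g, ContinuousAt (Phibar n g) x := by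
      intro x hx
      obtain ⟨⟨u₀, t₀⟩, rfl⟩ := Quotient.exists_rep x
      have hle : ‖(u₀ : ℂ)‖ ≤ 1 := mem_closedBall_zero_iff.mp u₀.2
      by_cases hb1 : ‖(u₀ : ℂ)‖ = 1
      · -- boundary case
        have hval : Phibar n g (Quotient.mk sphereSetoid (u₀, t₀)) = (u₀ : ℂ) ^ n := by
          show Fext n g (u₀, t₀) = _
          simp only [Fext, if_pos hb1]
        show Filter.Tendsto (Phibar n g) (nhds (Quotient.mk sphereSetoid (u₀, t₀)))
          (nhds (Phibar n g (Quotient.mk sphereSetoid (u₀, t₀))))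
        rw [hval, Filter.tendsto_def]
        intro V hV
        obtain ⟨ε, hε, hball⟩ := Metric.mem_nhds_iff.mp hV
        obtain ⟨δ, hδ0, hδn, hest⟩ := main_est n hn g C hC hbound ε hε
        set W : Set ((Metric.closedBall (0 : ℂ) 1) × AddCircle (2 * Real.pi)) :=
          {p | ‖(p.1 : ℂ) - (u₀ : ℂ)‖ < δ} with hW
        have hWopen : IsOpen W := by
          have hWeq : W = (fun p : (Metric.closedBall (0 : ℂ) 1) × AddCircle (2 * Real.pi) =>
              (p.1 : ℂ)) ⁻¹' Metric.ball (u₀ : ℂ) δ := by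
            ext p
            simp [hW, Metric.mem_ball, dist_eq_norm]
          rw [hWeq]
          exact Metric.isOpen_ball.preimage (continuous_subtype_val.comp continuous_fst)
        have hsat : Quotient.mk sphereSetoid ⁻¹' (Quotient.mk sphereSetoid '' W) = W := by
          apply Set.Subset.antisymm
          · intro p hp
            obtain ⟨p', hp', he⟩ := hp
            obtain ⟨h1, -⟩ := Quotient.exact he
            have hp'W : ‖(p'.1 : ℂ) - (u₀ : ℂ)‖ < δ := hp'
            show ‖(p.1 : ℂ) - (u₀ : ℂ)‖ < δ
            rwa [← h1]
          · intro p hp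
            exact ⟨p, hp, rfl⟩
        have hUopen : IsOpen (Quotient.mk sphereSetoid '' W) :=
          isOpen_sphere3 (by rw [hsat]; exact hWopen)
        have hxU : Quotient.mk sphereSetoid (u₀, t₀) ∈ Quotient.mk sphereSetoid '' W :=
          ⟨(u₀, t₀), by simp [hW, hδ0], rfl⟩
        refine Filter.mem_of_superset (hUopen.mem_nhds hxU) ?_
        rintro y ⟨p, hp, rfl⟩
        have hpW : ‖(p.1 : ℂ) - (u₀ : ℂ)‖ < δ := hp
        show Fext n g p ∈ V
        apply hball
        rw [Metric.mem_ball, dist_eq_norm]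
        have hple : ‖(p.1 : ℂ)‖ ≤ 1 := mem_closedBall_zero_iff.mp p.1.2
        by_cases hp1 : ‖(p.1 : ℂ)‖ = 1
        · simp only [Fext, if_pos hp1]
          calc ‖(p.1 : ℂ) ^ n - (u₀ : ℂ) ^ n‖ ≤ (n : ℝ) * ‖(p.1 : ℂ) - (u₀ : ℂ)‖ :=
                pow_diff (p.1 : ℂ) (u₀ : ℂ) (le_of_eq hp1) (le_of_eq hb1) n
            _ ≤ (n : ℝ) * δ := mul_le_mul_of_nonneg_left (le_of_lt hpW) (by positivity)
            _ < ε := hδn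
        · have hplt : ‖(p.1 : ℂ)‖ < 1 := lt_of_le_of_ne hple hp1
          obtain ⟨-, hlt2⟩ := hest (p.1 : ℂ) (u₀ : ℂ) p.2 hplt hb1 hpW
          simp only [Fext, if_neg hp1]
          exact hlt2
      · -- interior case
        have hlt : ‖(u₀ : ℂ)‖ < 1 := lt_of_le_of_ne hle hb1
        have heval : (g t₀).eval (phiDisk (u₀ : ℂ)) ≠ 0 := (hx u₀ t₀ rfl).resolve_left hb1
        have hcd : ContinuousAt (fun w : ℂ => ((1 - ‖w‖ : ℝ) : ℂ)) (u₀ : ℂ) :=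
          (Complex.continuous_ofReal.comp (continuous_const.sub continuous_norm)).continuousAt
        have hphi0 : ContinuousAt phiDisk (u₀ : ℂ) := by
          have h1 : ContinuousAt (fun w : ℂ => w / ((1 - ‖w‖ : ℝ) : ℂ)) (u₀ : ℂ) :=
            ContinuousAt.div continuousAt_id hcd
              (Complex.ofReal_ne_zero.mpr (by linarith))
          exact h1
        have hvalc : Continuous (fun p : (Metric.closedBall (0 : ℂ) 1) ×
            AddCircle (2 * Real.pi) => (p.1 : ℂ)) := continuous_subtype_val.comp continuous_fst
        have hphi : ContinuousAt
            (fun p : (Metric.closedBall (0 : ℂ) 1) × AddCircle (2 * Real.pi) =>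
              phiDisk (p.1 : ℂ)) (u₀, t₀) := by
          have : ContinuousAt
              (fun p : (Metric.closedBall (0 : ℂ) 1) × AddCircle (2 * Real.pi) =>
                (p.1 : ℂ) / ((1 - ‖(p.1 : ℂ)‖ : ℝ) : ℂ)) (u₀, t₀) :=
            ContinuousAt.div hvalc.continuousAt
              ((Complex.continuous_ofReal.comp (continuous_const.sub hvalc.norm)).continuousAt)
              (Complex.ofReal_ne_zero.mpr (by linarith))
          exact this
        have hev : ContinuousAt
            (fun p : (Metric.closedBall (0 : ℂ) 1) × AddCircle (2 * Real.pi) =>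
              (g p.2).eval (phiDisk (p.1 : ℂ))) (u₀, t₀) :=
          ContinuousAt.comp
            (g := fun y : ℂ × AddCircle (2 * Real.pi) => (g y.2).eval y.1)
            (f := fun p : (Metric.closedBall (0 : ℂ) 1) × AddCircle (2 * Real.pi) =>
              ((phiDisk (p.1 : ℂ), p.2) : ℂ × AddCircle (2 * Real.pi)))
            (hcont.continuousAt (x := (phiDisk (u₀ : ℂ), t₀)))
            (hphi.prodMk continuous_snd.continuousAt)
        have hofr : ContinuousAt
            (fun p : (Metric.closedBall (0 : ℂ) 1) × AddCircle (2 * Real.pi) =>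
              ((‖(g p.2).eval (phiDisk (p.1 : ℂ))‖ : ℝ) : ℂ)) (u₀, t₀) :=
          Complex.continuous_ofReal.continuousAt.comp hev.norm
        have hF : ContinuousAt
            (fun p : (Metric.closedBall (0 : ℂ) 1) × AddCircle (2 * Real.pi) =>
              (g p.2).eval (phiDisk (p.1 : ℂ)) /
                ((‖(g p.2).eval (phiDisk (p.1 : ℂ))‖ : ℝ) : ℂ)) (u₀, t₀) :=
          hev.div hofr (Complex.ofReal_ne_zero.mpr (norm_ne_zero_iff.mpr heval))
        have hO : IsOpen {p : (Metric.closedBall (0 : ℂ) 1) × AddCircle (2 * Real.pi) |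
            ‖(p.1 : ℂ)‖ < 1} := by
          have hOeq : {p : (Metric.closedBall (0 : ℂ) 1) × AddCircle (2 * Real.pi) |
              ‖(p.1 : ℂ)‖ < 1} = (fun p : (Metric.closedBall (0 : ℂ) 1) ×
                AddCircle (2 * Real.pi) => (p.1 : ℂ)) ⁻¹' Metric.ball 0 1 := by
            ext p
            simp [Metric.mem_ball, dist_eq_norm]
          rw [hOeq]
          exact Metric.isOpen_ball.preimage (continuous_subtype_val.comp continuous_fst)
        have hFc : ContinuousAt (Fext n g) (u₀, t₀) := by
          apply hF.congr
          apply Filter.eventuallyEq_of_mem (hO.mem_nhds hlt)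
          intro p hp
          have hp' : ‖(p.1 : ℂ)‖ < 1 := hp
          simp only [Fext, if_neg (ne_of_lt hp')]
        show Filter.Tendsto (Phibar n g) (nhds (Quotient.mk sphereSetoid (u₀, t₀)))
          (nhds (Phibar n g (Quotient.mk sphereSetoid (u₀, t₀))))
        rw [Filter.tendsto_def]
        intro V hV
        have hV' : (Fext n g) ⁻¹' V ∈
            nhds ((u₀, t₀) : (Metric.closedBall (0 : ℂ) 1) × AddCircle (2 * Real.pi)) :=
          hFc hV
        obtain ⟨O₂, hsub2, hO2open, hmem2⟩ :=
          mem_nhds_iff.mp (Filter.inter_mem hV' (hO.mem_nhds hlt))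
        have hsat2 : Quotient.mk sphereSetoid ⁻¹' (Quotient.mk sphereSetoid '' O₂) = O₂ := by
          apply Set.Subset.antisymm
          · intro p hp
            obtain ⟨p', hp', he⟩ := hp
            obtain ⟨h1, h2⟩ := Quotient.exact he
            have hlt' : ‖(p'.1 : ℂ)‖ < 1 := (hsub2 hp').2
            rcases h2 with h2 | h2
            · have hpp : p' = p := Prod.ext h1 h2
              rwa [← hpp]
            · exact absurd h2 (ne_of_lt hlt')
          · intro p hp
            exact ⟨p, hp, rfl⟩
        have hUopen : IsOpen (Quotient.mk sphereSetoid '' O₂) :=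
          isOpen_sphere3 (by rw [hsat2]; exact hO2open)
        have hxU : Quotient.mk sphereSetoid (u₀, t₀) ∈ Quotient.mk sphereSetoid '' O₂ :=
          ⟨(u₀, t₀), hmem2, rfl⟩
        refine Filter.mem_of_superset (hUopen.mem_nhds hxU) ?_
        rintro y ⟨p, hp, rfl⟩
        exact (hsub2 hp).1
    exact ContinuousOn.restrict (fun x hx => (hCA x hx).continuousWithinAt)
  · -- norm one
    intro x
    obtain ⟨⟨u, t⟩, hmk⟩ := Quotient.exists_rep (x : Sphere3)
    show ‖Phibar n g (x : Sphere3)‖ = 1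
    rw [← hmk]
    show ‖Fext n g (u, t)‖ = 1
    by_cases h : ‖(u : ℂ)‖ = 1
    · simp only [Fext, if_pos h]
      rw [norm_pow, h, one_pow]
    · have heval : (g t).eval (phiDisk (u : ℂ)) ≠ 0 := (x.2 u t hmk).resolve_left h
      simp only [Fext, if_neg h]
      rw [norm_div, Complex.norm_real, Real.norm_eq_abs, abs_norm,
        div_self (norm_ne_zero_iff.mpr heval)]
  · -- specification
    intro x u t hmk
    constructor
    · intro hlt
      show Phibar n g (x : Sphere3) = _
      rw [← hmk]
      show Fext n g (u, t) = _
      simp only [Fext, if_neg (ne_of_lt hlt)]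
    · intro heq
      show Phibar n g (x : Sphere3) = _
      rw [← hmk]
      show Fext n g (u, t) = _
      simp only [Fext, if_pos heq]
end
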